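/- The quartic form f^{μ,ν,0} = x³y + y³z + z³t + t³x + μ x²z² + ν y²t² over an algebraically closed field k of characteristic zero is singular if and only if 256(1 + 3μ²ν²)² = (27μ² + 6μν + 27ν² - 16μ³ν³)². -/

import Mathlib

open MvPolynomial

/-- A quartic form in `k[x,y,z,t]` is singular if its four partial derivatives have a common
zero in `k⁴ \ {0}`, i.e. the projective surface `V(f) ⊆ ℙ³(k)` has a singular point. -/
def MvPolynomial.IsSingularForm {k : Type*} [CommRing k] (f : MvPolynomial (Fin 4) k) : Prop :=
  ∃ p : Fin 4 → k, p ≠ 0 ∧ ∀ i : Fin 4, eval p (pderiv i f) = 0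

/-!
Every singular point of `f = x³y + y³z + z³t + t³x + μx²z² + νy²t²` has `y ≠ 0`, so it may be
taken with `y = 1`; the critical equations then force `z = t³x` and `t¹⁰ = 1`, and replacing `x`
by `t⁶x` (the diagonal symmetry `(x, y, z, t) ↦ (ζx, y, ζ³z, ζ⁴t)`, `ζ⁵ = 1`, of `f`) moves it to
`(x, 1, εx, ε)` with `ε = t⁵ = ±1`. On these points the four equations reduce to the cubics
`2μx³ + 3x² + ε = 0` and `x³ + 3εx + 2ν = 0`. Eliminating `x³` leaves a quadratic and a linear
equation whose resultant is `4(16ε(1 + 3μ²ν²) + 27μ² + 6μν + 27ν² - 16μ³ν³)`, and letting `ε`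
run over both signs gives the squared criterion.
-/

section Elimination

variable {K : Type*} [Field K]

theorem exists_quadratic_linear_common_root_iff [IsAlgClosed K] {a b c P Q : K} (ha : a ≠ 0) :
    (∃ x, a * x ^ 2 + b * x + c = 0 ∧ P * x + Q = 0) ↔ a * Q ^ 2 - b * P * Q + c * P ^ 2 = 0 := by
  constructor
  · rintro ⟨x, hq, hL⟩
    linear_combination P ^ 2 * hq + (a * (Q - P * x) - b * P) * hL
  · intro hres
    by_cases hP : P = 0
    · subst hP
      have hQ : Q = 0 := pow_eq_zero_iff two_ne_zero |>.mp <|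
        (mul_eq_zero.mp (by linear_combination hres : a * Q ^ 2 = 0)).resolve_left ha
      obtain ⟨x, hx⟩ := IsAlgClosed.exists_root
        (Polynomial.C a * Polynomial.X ^ 2 + Polynomial.C b * Polynomial.X + Polynomial.C c)
        (by rw [Polynomial.degree_quadratic ha]; decide)
      exact ⟨x, by simpa using hx, by simp [hQ]⟩
    · refine ⟨-Q / P, ?_, by field_simp; ring⟩
      have h : (a * (-Q / P) ^ 2 + b * (-Q / P) + c) * P ^ 2 =
          a * Q ^ 2 - b * P * Q + c * P ^ 2 := by
        field_simp; ring
      exact (mul_eq_zero.mp (h.trans hres)).resolve_right (pow_ne_zero 2 hP)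

theorem exists_sq_eq_one_mul_add_eq_zero_iff (a b : K) :
    (∃ ε : K, ε ^ 2 = 1 ∧ ε * a + b = 0) ↔ a ^ 2 = b ^ 2 := by
  constructor
  · rintro ⟨ε, hε, h⟩
    linear_combination (ε * a - b) * h - a ^ 2 * hε
  · intro h
    rcases sq_eq_sq_iff_eq_or_eq_neg.mp h with h | h
    · exact ⟨-1, by ring, by rw [h]; ring⟩
    · exact ⟨1, by ring, by rw [h]; ring⟩

end Elimination

section Quartic

variable {k : Type*}

noncomputable def cyclicQuartic [CommRing k] (μ ν : k) : MvPolynomial (Fin 4) k :=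
  X 0 ^ 3 * X 1 + X 1 ^ 3 * X 2 + X 2 ^ 3 * X 3 + X 3 ^ 3 * X 0 +
    C μ * X 0 ^ 2 * X 2 ^ 2 + C ν * X 1 ^ 2 * X 3 ^ 2

structure IsCriticalPoint [CommRing k] (μ ν x y z t : k) : Prop where
  deriv_x : 3 * x ^ 2 * y + t ^ 3 + 2 * μ * x * z ^ 2 = 0
  deriv_y : x ^ 3 + 3 * y ^ 2 * z + 2 * ν * y * t ^ 2 = 0
  deriv_z : y ^ 3 + 3 * z ^ 2 * t + 2 * μ * x ^ 2 * z = 0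
  deriv_t : z ^ 3 + 3 * t ^ 2 * x + 2 * ν * y ^ 2 * t = 0

theorem eval_pderiv_cyclicQuartic_eq_zero_iff [CommRing k] (μ ν : k) (p : Fin 4 → k) :
    (∀ i, eval p (pderiv i (cyclicQuartic μ ν)) = 0) ↔
      IsCriticalPoint μ ν (p 0) (p 1) (p 2) (p 3) := by
  simp only [Fin.forall_fin_succ]
  simp [cyclicQuartic, Pi.single_apply]
  exact ⟨fun ⟨h₀, h₁, h₂, h₃⟩ ↦ ⟨by linear_combination h₀, by linear_combination h₁,
      by linear_combination h₂, by linear_combination h₃⟩,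
    fun h ↦ ⟨by linear_combination h.deriv_x, by linear_combination h.deriv_y,
      by linear_combination h.deriv_z, by linear_combination h.deriv_t⟩⟩

namespace IsCriticalPoint

variable {μ ν x y z t : k}

section CommRing

variable [CommRing k]

theorem mul (h : IsCriticalPoint μ ν x y z t) (a : k) :
    IsCriticalPoint μ ν (a * x) (a * y) (a * z) (a * t) :=
  ⟨by linear_combination a ^ 3 * h.deriv_x, by linear_combination a ^ 3 * h.deriv_y,
    by linear_combination a ^ 3 * h.deriv_z, by linear_combination a ^ 3 * h.deriv_t⟩

variable [IsDomain k]

theorem eq_zero_of_y_eq_zero (h : IsCriticalPoint μ ν x y z t) (hy : y = 0) :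
    x = 0 ∧ z = 0 ∧ t = 0 := by
  subst hy
  have hx : x = 0 := pow_eq_zero_iff three_ne_zero |>.mp (by linear_combination h.deriv_y)
  subst hx
  have ht : t = 0 := pow_eq_zero_iff three_ne_zero |>.mp (by linear_combination h.deriv_x)
  subst ht
  exact ⟨rfl, pow_eq_zero_iff three_ne_zero |>.mp (by linear_combination h.deriv_t), rfl⟩

theorem x_ne_zero (h : IsCriticalPoint μ ν x 1 z t) : x ≠ 0 := by
  rintro rfl
  have ht : t = 0 := pow_eq_zero_iff three_ne_zero |>.mp (by linear_combination h.deriv_x)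
  exact one_ne_zero (by linear_combination h.deriv_z - (3 * z ^ 2 : k) * ht)

theorem t_ne_zero (h : IsCriticalPoint μ ν x 1 z t) : t ≠ 0 := by
  rintro rfl
  have hz : z = 0 := pow_eq_zero_iff three_ne_zero |>.mp (by linear_combination h.deriv_t)
  exact one_ne_zero (by linear_combination h.deriv_z - (2 * μ * x ^ 2 : k) * hz)

end CommRing

variable [Field k] [CharZero k]

theorem z_eq (h : IsCriticalPoint μ ν x 1 z t) : z = t ^ 3 * x := by
  have h₁ : 3 * x ^ 3 + x * t ^ 3 - z - 3 * z ^ 3 * t = 0 := by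
    linear_combination x * h.deriv_x - z * h.deriv_z
  have h₂ : x ^ 3 + 3 * z - z ^ 3 * t - 3 * t ^ 3 * x = 0 := by
    refine (mul_eq_zero.mp ?_).resolve_left h.t_ne_zero
    linear_combination t * h.deriv_y - t ^ 2 * h.deriv_t
  linear_combination (3 * h₂ - h₁) / 10

theorem t_pow_ten (h : IsCriticalPoint μ ν x 1 z t) : t ^ 10 = 1 := by
  have hx := pow_ne_zero 3 h.x_ne_zero
  have hz := h.z_eq
  subst hz
  refine mul_left_cancel₀ hx ?_
  linear_combination (t ^ 3 * x * h.deriv_z - x * h.deriv_x) / 3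

theorem exists_commonRoot (h : IsCriticalPoint μ ν x 1 z t) :
    ∃ ε : k, ε ^ 2 = 1 ∧ ∃ x₀ : k, 2 * μ * x₀ ^ 3 + 3 * x₀ ^ 2 + ε = 0 ∧
      x₀ ^ 3 + 3 * ε * x₀ + 2 * ν = 0 := by
  have ht := h.t_pow_ten
  have hz := h.z_eq
  subst hz
  refine ⟨t ^ 5, by linear_combination ht, t ^ 6 * x, ?_, ?_⟩
  · linear_combination t ^ 2 * h.deriv_x + (3 * t ^ 2 * x ^ 2 + 2 * μ * t ^ 8 * x ^ 3) * ht
  · linear_combination t ^ 8 * h.deriv_y + (t ^ 8 * x ^ 3 - 2 * ν) * ht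

end IsCriticalPoint

theorem isCriticalPoint_of_commonRoot [CommRing k] {μ ν ε x : k} (hε : ε ^ 2 = 1)
    (h₁ : 2 * μ * x ^ 3 + 3 * x ^ 2 + ε = 0) (h₂ : x ^ 3 + 3 * ε * x + 2 * ν = 0) :
    IsCriticalPoint μ ν x 1 (ε * x) ε :=
  ⟨by linear_combination h₁ + (2 * μ * x ^ 3 + ε) * hε, by linear_combination h₂ + 2 * ν * hε,
    by linear_combination ε * h₁ + (3 * x ^ 2 * ε - 1) * hε,
    by linear_combination ε * h₂ + x ^ 3 * ε * hε⟩

theorem isSingularForm_cyclicQuartic_iff [Field k] (μ ν : k) :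
    (cyclicQuartic μ ν).IsSingularForm ↔ ∃ x z t : k, IsCriticalPoint μ ν x 1 z t := by
  simp only [IsSingularForm, eval_pderiv_cyclicQuartic_eq_zero_iff]
  constructor
  · rintro ⟨p, hp, h⟩
    have hy : p 1 ≠ 0 := by
      intro hy
      obtain ⟨hx, hz, ht⟩ := h.eq_zero_of_y_eq_zero hy
      exact hp (funext fun i ↦ by fin_cases i <;> assumption)
    refine ⟨(p 1)⁻¹ * p 0, (p 1)⁻¹ * p 2, (p 1)⁻¹ * p 3, ?_⟩
    simpa [inv_mul_cancel₀ hy] using h.mul (p 1)⁻¹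
  · rintro ⟨x, z, t, h⟩
    exact ⟨![x, 1, z, t], fun h0 ↦ one_ne_zero (congrFun h0 1), h⟩

theorem exists_commonRoot_iff [Field k] [IsAlgClosed k] [CharZero k] {μ ν ε : k}
    (hε : ε ^ 2 = 1) :
    (∃ x : k, 2 * μ * x ^ 3 + 3 * x ^ 2 + ε = 0 ∧ x ^ 3 + 3 * ε * x + 2 * ν = 0) ↔
      ε * (16 + 48 * μ ^ 2 * ν ^ 2) +
        (27 * μ ^ 2 + 6 * μ * ν + 27 * ν ^ 2 - 16 * μ ^ 3 * ν ^ 3) = 0 := by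
  have hres : 3 * (6 * ν - 2 * μ + 8 * ε * μ ^ 2 * ν) ^ 2
      - -6 * ε * μ * (12 * μ ^ 2 + 4 * μ * ν + 8 * ε) * (6 * ν - 2 * μ + 8 * ε * μ ^ 2 * ν)
      + (ε - 4 * μ * ν) * (12 * μ ^ 2 + 4 * μ * ν + 8 * ε) ^ 2 =
      4 * (ε * (16 + 48 * μ ^ 2 * ν ^ 2) +
        (27 * μ ^ 2 + 6 * μ * ν + 27 * ν ^ 2 - 16 * μ ^ 3 * ν ^ 3)) := by
    linear_combination (576 * μ ^ 5 * ν + 384 * μ ^ 4 * ν ^ 2 + 384 * μ ^ 3 * ν * ε + 96 * μ ^ 2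
      + 96 * μ * ν + 64 * ε) * hε
  -- The quadratic is the first cubic minus `2μ` times the second; the linear equation is three
  -- times the second cubic reduced modulo the quadratic and `ε² = 1`.
  calc (∃ x : k, 2 * μ * x ^ 3 + 3 * x ^ 2 + ε = 0 ∧ x ^ 3 + 3 * ε * x + 2 * ν = 0)
      ↔ ∃ x : k, 3 * x ^ 2 + -6 * ε * μ * x + (ε - 4 * μ * ν) = 0 ∧
          (12 * μ ^ 2 + 4 * μ * ν + 8 * ε) * x + (6 * ν - 2 * μ + 8 * ε * μ ^ 2 * ν) = 0 := by
        refine exists_congr fun x ↦ ⟨fun ⟨h₁, h₂⟩ ↦ ⟨?_, ?_⟩, fun ⟨hq, hL⟩ ↦ ⟨?_, ?_⟩⟩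
        · linear_combination h₁ - 2 * μ * h₂
        · linear_combination 3 * h₂ - (x + 2 * ε * μ) * (h₁ - 2 * μ * h₂)
            - (12 * μ ^ 2 * x - 2 * μ) * hε
        · linear_combination hq + 2 * μ / 3 * (hL + (x + 2 * ε * μ) * hq
            + (12 * μ ^ 2 * x - 2 * μ) * hε)
        · linear_combination (hL + (x + 2 * ε * μ) * hq + (12 * μ ^ 2 * x - 2 * μ) * hε) / 3
    _ ↔ _ := exists_quadratic_linear_common_root_iff three_ne_zero
    _ ↔ _ := by rw [hres, mul_eq_zero, or_iff_right (by norm_num)]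

end Quartic

/-- the quartic form `f^{μ,ν,0} = x³y + y³z + z³t + t³x + μx²z² + νy²t²` is
singular iff `256(1 + 3μ²ν²)² = (27μ² + 6μν + 27ν² - 16μ³ν³)²`. -/
theorem stmt_10 {k : Type*} [Field k] [IsAlgClosed k] [CharZero k] (μ ν : k) :
    (X 0 ^ 3 * X 1 + X 1 ^ 3 * X 2 + X 2 ^ 3 * X 3 + X 3 ^ 3 * X 0 +
        C μ * X 0 ^ 2 * X 2 ^ 2 +
        C ν * X 1 ^ 2 * X 3 ^ 2 : MvPolynomial (Fin 4) k).IsSingularForm ↔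
      256 * (1 + 3 * μ ^ 2 * ν ^ 2) ^ 2 =
        (27 * μ ^ 2 + 6 * μ * ν + 27 * ν ^ 2 - 16 * μ ^ 3 * ν ^ 3) ^ 2 := by
  have hA : 256 * (1 + 3 * μ ^ 2 * ν ^ 2) ^ 2 = (16 + 48 * μ ^ 2 * ν ^ 2) ^ 2 := by ring
  rw [hA, ← exists_sq_eq_one_mul_add_eq_zero_iff]
  refine (isSingularForm_cyclicQuartic_iff μ ν).trans ⟨?_, ?_⟩
  · rintro ⟨x, z, t, h⟩
    obtain ⟨ε, hε, hroot⟩ := h.exists_commonRoot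
    exact ⟨ε, hε, (exists_commonRoot_iff hε).1 hroot⟩
  · rintro ⟨ε, hε, hres⟩
    obtain ⟨x, h₁, h₂⟩ := (exists_commonRoot_iff hε).2 hres
    exact ⟨x, ε * x, ε, isCriticalPoint_of_commonRoot hε h₁ h₂⟩
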